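/- For a smooth complete complex variety X of pure dimension d with Chern roots α_1,...,α_d of TX and a vector bundle E with Chern roots β_1,...,β_r, the generalized Hirzebruch Riemann-Roch identity (1+y)^{-d}·ch_{(1+y)}(E ⊗ λ_y(T*X))·Td_{(1+y)}(TX) = \widetilde{td}_{(y)}(TX)·ch_{(1+y)}(E) holds at the level of Chern roots, i.e. as the formal power series identity (Π_{i=1}^d (1+y e^{-α_i(1+y)})·(α_i(1+y)/(1-e^{-α_i(1+y)}))·(1+y)^{-1})·(Σ_j e^{β_j(1+y)}) = (Π_{i=1}^d Q_y(α_i))·(Σ_j e^{β_j(1+y)}). -/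
import Mathlib

/-- generalized Hirzebruch Riemann-Roch at the level of Chern
roots: in a commutative ring in which `1 + y` is invertible (e.g.
`ℚ[[y, α₁, …, α_d, β₁, …, β_r]]`), let `E i = e^{-αᵢ(1+y)}`,
`T i = αᵢ(1+y)/(1 - e^{-αᵢ(1+y)})` (so `T i·(1 - E i) = αᵢ(1+y)`), and let
`ch j = e^{β_j(1+y)}` be the summands of `ch_{(1+y)}(E)`.  Then
`(1+y)^{-d}·ch_{(1+y)}(λ_y T*X)·Td_{(1+y)}(TX)·ch_{(1+y)}(E)
  = (∏ᵢ Q_y(αᵢ))·ch_{(1+y)}(E)`, i.e.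
`(∏ᵢ (1+y·E i)·(T i)·(1+y)⁻¹)·(∑ⱼ ch j) = (∏ᵢ (T i - αᵢ y))·(∑ⱼ ch j)`. -/
theorem stmt18 (R : Type*) [CommRing R] (d r : ℕ) (y u : R)
    (α E T : Fin d → R) (ch : Fin r → R)
    (hu : u * (1 + y) = 1)
    (hT : ∀ i, T i * (1 - E i) = α i * (1 + y)) :
    (∏ i, ((1 + y * E i) * T i * u)) * (∑ j, ch j)
      = (∏ i, (T i - α i * y)) * (∑ j, ch j) := by
  congr 1
  apply Finset.prod_congr rfl
  intro i _
  have h : (1 + y * E i) * T i = (T i - α i * y) * (1 + y) := by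
    have := hT i; ring_nf; ring_nf at this; linear_combination -y * this
  calc (1 + y * E i) * T i * u = (T i - α i * y) * ((1 + y) * u) := by rw [h]; ring
    _ = T i - α i * y := by rw [mul_comm (1+y) u, hu, mul_one]
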